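/- Let G be a finite connected weighted graph with disjoint cover {S_j}_{j∈J} by connected induced subgraphs each having more than one vertex. For each j let ψ_j ∈ ℓ²(G) be supported in S_j with ⟨ψ_j, φ_{0,j}⟩ ≠ 0, where φ_{0,j} = χ_{S_j}/√|S_j|, and set ζ_j = ψ_j / (√|S_j| ⟨ψ_j, φ_{0,j}⟩) and Θ_j = ‖ψ_j‖² / (λ_{1,j} |⟨ψ_j, φ_{0,j}⟩|²), Θ_Ξ = max_j Θ_j. Then for every f ∈ ℓ²(G): Σ_{j∈J} Σ_{v∈S_j} |f(v) − ⟨ζ_j, f⟩|² ≤ Θ_Ξ ‖∇f‖²_{ℓ²(G)}. -/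

import Mathlib

open Finset

/-- Weighted gradient norm squared: `‖∇f‖² = (1/2) Σ_{u,v} |f(u)−f(v)|² w(u,v)`. -/
noncomputable def gradSq {V : Type*} [Fintype V] (w : V → V → ℝ) (f : V → ℂ) : ℝ :=
  (1 / 2) * ∑ u, ∑ v, ‖f u - f v‖ ^ 2 * w u v

/-- Weighted graph Laplacian: `(Lf)(v) = Σ_u (f(v) − f(u)) w(v,u)`. -/
noncomputable def lap {V : Type*} [Fintype V] (w : V → V → ℝ) (f : V → ℂ) : V → ℂ :=
  fun v => ∑ u, (f v - f u) * ((w v u : ℝ) : ℂ)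

/-- Inner product on `ℓ²(G)`. -/
noncomputable def ip {V : Type*} [Fintype V] (ψ f : V → ℂ) : ℂ :=
  ∑ v, (starRingEnd ℂ) (ψ v) * f v

/-- Squared `ℓ²(G)` norm. -/
noncomputable def nsq {V : Type*} [Fintype V] (f : V → ℂ) : ℝ :=
  ∑ v, ‖f v‖ ^ 2

/-- The graph with weight `w` is connected. -/
def GraphConnected {V : Type*} [Fintype V] (w : V → V → ℝ) : Prop :=
  ∀ u v : V, Relation.ReflTransGen (fun a b => 0 < w a b) u v

/-- `lam1` is the first (smallest) nonzero eigenvalue of the Laplacian of `(V, w)`. -/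
def IsFirstNonzeroEig {V : Type*} [Fintype V] (w : V → V → ℝ) (lam1 : ℝ) : Prop :=
  0 < lam1 ∧
  (∃ φ : V → ℂ, φ ≠ 0 ∧ lap w φ = fun v => (lam1 : ℂ) * φ v) ∧
  ∀ (μ : ℝ) (φ : V → ℂ), φ ≠ 0 → (lap w φ = fun v => (μ : ℂ) * φ v) → μ = 0 ∨ lam1 ≤ μ

/-- Gradient norm squared of the induced subgraph on the vertex set `S`. -/
noncomputable def gradSqOn {V : Type*} [Fintype V] (w : V → V → ℝ) (S : Finset V)
    (f : V → ℂ) : ℝ :=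
  (1 / 2) * ∑ u ∈ S, ∑ v ∈ S, ‖f u - f v‖ ^ 2 * w u v

/-- Laplacian of the induced subgraph on the vertex set `S`. -/
noncomputable def lapOn {V : Type*} [Fintype V] (w : V → V → ℝ) (S : Finset V)
    (f : V → ℂ) : V → ℂ :=
  fun v => ∑ u ∈ S, (f v - f u) * ((w v u : ℝ) : ℂ)

/-- The induced subgraph on `S` is connected. -/
def GraphConnectedOn {V : Type*} [Fintype V] (w : V → V → ℝ) (S : Finset V) : Prop :=
  ∀ u ∈ S, ∀ v ∈ S, Relation.ReflTransGen (fun a b => a ∈ S ∧ b ∈ S ∧ 0 < w a b) u v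

/-- `lam1` is the first nonzero eigenvalue of the Laplacian of the induced subgraph on `S`. -/
def IsFirstNonzeroEigOn {V : Type*} [Fintype V] (w : V → V → ℝ) (S : Finset V)
    (lam1 : ℝ) : Prop :=
  0 < lam1 ∧
  (∃ φ : V → ℂ, (∀ v ∉ S, φ v = 0) ∧ φ ≠ 0 ∧
      ∀ v ∈ S, lapOn w S φ v = (lam1 : ℂ) * φ v) ∧
  ∀ (μ : ℝ) (φ : V → ℂ), (∀ v ∉ S, φ v = 0) → φ ≠ 0 →
    (∀ v ∈ S, lapOn w S φ v = (μ : ℂ) * φ v) → μ = 0 ∨ lam1 ≤ μ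

open scoped InnerProductSpace

/-!
On a block `S` with normalized indicator `e = φ₀`, the sample value `c` is chosen so that
`g = (f - c) · 1_S` is orthogonal to `ψ`. Splitting `g = ⟪e, g⟫ e + h` with `h ⊥ e` (that is, `h`
has mean zero on `S`), orthogonality gives `⟪e, g⟫ ⟪ψ, e⟫ = -⟪ψ - ⟪e, ψ⟫ e, h⟫`, and
Cauchy–Schwarz together with Pythagoras yields `‖g‖² |⟪ψ, e⟫|² ≤ ‖ψ‖² ‖h‖²`. The mean-zero part is
controlled by the spectral gap of the block Laplacian, `λ₁ ‖h‖² ≤ ‖∇_S h‖² = ‖∇_S f‖²`: expand `h`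
in an eigenbasis, where the eigenvalue-`0` eigenvectors are constant on the connected block and
hence orthogonal to `h`. Finally the block energies `‖∇_S f‖²` of disjoint blocks add up to at
most `‖∇f‖²`.
-/

section InnerProduct

variable {𝕜 E : Type*} [RCLike 𝕜] [NormedAddCommGroup E] [InnerProductSpace 𝕜 E]

theorem norm_sq_mul_norm_inner_sq_le_of_inner_eq_zero {ψ e g : E} (he : ‖e‖ = 1)
    (hg : ⟪ψ, g⟫_𝕜 = 0) :
    ‖g‖ ^ 2 * ‖⟪ψ, e⟫_𝕜‖ ^ 2 ≤ ‖ψ‖ ^ 2 * ‖g - ⟪e, g⟫_𝕜 • e‖ ^ 2 := by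
  have hee : ⟪e, e⟫_𝕜 = 1 := by rw [inner_self_eq_norm_sq_to_K, he]; simp
  have orth : ∀ x : E, ⟪e, x - ⟪e, x⟫_𝕜 • e⟫_𝕜 = 0 := fun x => by
    rw [inner_sub_right, inner_smul_right, hee, mul_one, sub_self]
  have pythagoras : ∀ x : E, ‖x‖ ^ 2 = ‖⟪e, x⟫_𝕜‖ ^ 2 + ‖x - ⟪e, x⟫_𝕜 • e‖ ^ 2 := fun x => by
    have := norm_add_sq_eq_norm_sq_add_norm_sq_of_inner_eq_zero (⟪e, x⟫_𝕜 • e) (x - ⟪e, x⟫_𝕜 • e)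
      (by rw [inner_smul_left, orth, mul_zero])
    rw [add_sub_cancel, norm_smul, he, mul_one] at this
    simpa only [sq] using this
  set h := g - ⟪e, g⟫_𝕜 • e
  set ψ' := ψ - ⟪e, ψ⟫_𝕜 • e
  have key : ⟪ψ', h⟫_𝕜 = -(⟪e, g⟫_𝕜 * ⟪ψ, e⟫_𝕜) := by
    have : ⟪ψ, h⟫_𝕜 = -(⟪e, g⟫_𝕜 * ⟪ψ, e⟫_𝕜) := by
      rw [inner_sub_right, hg, inner_smul_right, zero_sub]
    rw [← this, inner_sub_left, inner_smul_left, orth, mul_zero, sub_zero]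
  have cs : ‖⟪e, g⟫_𝕜‖ ^ 2 * ‖⟪ψ, e⟫_𝕜‖ ^ 2 ≤ ‖ψ'‖ ^ 2 * ‖h‖ ^ 2 := by
    rw [← mul_pow, ← mul_pow, ← norm_mul, ← norm_neg, ← key]
    exact pow_le_pow_left₀ (norm_nonneg _) (norm_inner_le_norm ψ' h) 2
  have hψ : ‖ψ‖ ^ 2 = ‖⟪ψ, e⟫_𝕜‖ ^ 2 + ‖ψ'‖ ^ 2 := by
    rw [pythagoras ψ, norm_inner_symm]
  rw [pythagoras g, hψ]
  nlinarith [sq_nonneg ‖⟪ψ, e⟫_𝕜‖, sq_nonneg ‖h‖]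

theorem LinearMap.IsSymmetric.mul_norm_sq_le_re_inner_self [FiniteDimensional 𝕜 E]
    {T : E →ₗ[𝕜] E} (hT : T.IsSymmetric) {c : ℝ} {x : E}
    (hx : ∀ (μ : ℝ) (v : E), v ≠ 0 → T v = (μ : 𝕜) • v → c ≤ μ ∨ ⟪v, x⟫_𝕜 = 0) :
    c * ‖x‖ ^ 2 ≤ RCLike.re ⟪x, T x⟫_𝕜 := by
  set b := hT.eigenvectorBasis rfl
  set μ := hT.eigenvalues rfl
  have hTx : ⟪x, T x⟫_𝕜 = ∑ i, ((μ i * ‖⟪b i, x⟫_𝕜‖ ^ 2 : ℝ) : 𝕜) := by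
    rw [← b.sum_inner_mul_inner x (T x)]
    refine sum_congr rfl fun i _ => ?_
    rw [← hT, hT.apply_eigenvectorBasis, inner_smul_left, RCLike.conj_ofReal, ← inner_conj_symm,
      mul_left_comm, RCLike.conj_mul]
    push_cast
    rfl
  rw [hTx, map_sum, ← b.sum_sq_norm_inner_right, mul_sum]
  refine sum_le_sum fun i _ => ?_
  rw [RCLike.ofReal_re]
  rcases hx (μ i) (b i) (b.orthonormal.ne_zero i) (hT.apply_eigenvectorBasis rfl i) with h | h
  · exact mul_le_mul_of_nonneg_right h (sq_nonneg _)
  · simp [h]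

end InnerProduct

section Laplacian

variable {V : Type*} [Fintype V]

theorem ip_eq_inner (ψ f : V → ℂ) : ip ψ f = ⟪WithLp.toLp 2 ψ, WithLp.toLp 2 f⟫_ℂ := by
  simp [ip, PiLp.inner_apply, mul_comm]

theorem nsq_eq_norm_sq (f : V → ℂ) : nsq f = ‖WithLp.toLp 2 f‖ ^ 2 := by
  simp [nsq, EuclideanSpace.norm_sq_eq]

theorem nsq_nonneg (f : V → ℂ) : 0 ≤ nsq f := by
  rw [nsq_eq_norm_sq]; positivity

noncomputable def lapLinearMap (w : V → V → ℝ) : EuclideanSpace ℂ V →ₗ[ℂ] EuclideanSpace ℂ V where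
  toFun x := WithLp.toLp 2 (lap w x)
  map_add' x y := by
    ext v
    simp [lap, ← sum_add_distrib, add_sub_add_comm, add_mul]
  map_smul' a x := by
    ext v
    simp [lap, mul_sum, ← mul_sub, mul_assoc]

theorem lapLinearMap_apply (w : V → V → ℝ) (x : EuclideanSpace ℂ V) (v : V) :
    lapLinearMap w x v = lap w x v := rfl

theorem inner_lapLinearMap (w : V → V → ℝ) (hsymm : ∀ u v, w u v = w v u)
    (x y : EuclideanSpace ℂ V) :
    ⟪x, lapLinearMap w y⟫_ℂ =
      (1 / 2) * ∑ u, ∑ v, (starRingEnd ℂ) (x u - x v) * (y u - y v) * (w u v : ℂ) := by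
  have hswap : ∑ u, ∑ v, (starRingEnd ℂ) (x u) * (y u - y v) * (w u v : ℂ) =
      ∑ u, ∑ v, (starRingEnd ℂ) (x v) * (y v - y u) * (w u v : ℂ) := by
    rw [sum_comm]; simp_rw [hsymm]
  have hsplit : ∑ u, ∑ v, (starRingEnd ℂ) (x u - x v) * (y u - y v) * (w u v : ℂ) =
      ∑ u, ∑ v, (starRingEnd ℂ) (x u) * (y u - y v) * (w u v : ℂ) +
        ∑ u, ∑ v, (starRingEnd ℂ) (x v) * (y v - y u) * (w u v : ℂ) := by
    rw [← sum_add_distrib]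
    refine sum_congr rfl fun u _ => ?_
    rw [← sum_add_distrib]
    refine sum_congr rfl fun v _ => ?_
    rw [map_sub]; ring
  have hlhs : ⟪x, lapLinearMap w y⟫_ℂ =
      ∑ u, ∑ v, (starRingEnd ℂ) (x u) * (y u - y v) * (w u v : ℂ) := by
    simp only [PiLp.inner_apply, RCLike.inner_apply', lapLinearMap_apply, lap, mul_sum, mul_assoc]
  rw [hsplit, ← hswap, hlhs]
  ring

theorem lapLinearMap_isSymmetric (w : V → V → ℝ) (hsymm : ∀ u v, w u v = w v u) :
    (lapLinearMap w).IsSymmetric := by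
  intro x y
  rw [← inner_conj_symm, inner_lapLinearMap w hsymm, inner_lapLinearMap w hsymm, map_mul, map_sum]
  simp only [map_sum, map_mul, RCLike.conj_conj, Complex.conj_ofReal, map_div₀, map_one, map_ofNat]
  congr 1; refine sum_congr rfl fun u _ => sum_congr rfl fun v _ => by ring

theorem inner_lapLinearMap_self (w : V → V → ℝ) (hsymm : ∀ u v, w u v = w v u)
    (x : EuclideanSpace ℂ V) : ⟪x, lapLinearMap w x⟫_ℂ = (gradSq w x : ℂ) := by
  simp [inner_lapLinearMap w hsymm, gradSq, -map_sub, Complex.conj_mul']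

end Laplacian

section Induced

variable {V : Type*} [DecidableEq V]

def induceWeight (w : V → V → ℝ) (S : Finset V) : V → V → ℝ :=
  fun u v => if u ∈ S ∧ v ∈ S then w u v else 0

theorem induceWeight_symm {w : V → V → ℝ} (hsymm : ∀ u v, w u v = w v u) (S : Finset V)
    (u v : V) : induceWeight w S u v = induceWeight w S v u := by
  simp only [induceWeight, and_comm, hsymm u v]

variable [Fintype V]

theorem gradSq_induceWeight (w : V → V → ℝ) (S : Finset V) (f : V → ℂ) :
    gradSq (induceWeight w S) f = gradSqOn w S f := by
  simp only [gradSq, gradSqOn, induceWeight, ite_and, mul_ite, mul_zero, sum_ite_irrel,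
    sum_const_zero, sum_ite_mem, univ_inter]

theorem lap_induceWeight_of_mem (w : V → V → ℝ) {S : Finset V} (f : V → ℂ) {v : V}
    (hv : v ∈ S) : lap (induceWeight w S) f v = lapOn w S f v := by
  simp [lap, lapOn, induceWeight, hv, apply_ite, sum_ite_mem]

theorem lap_induceWeight_of_notMem (w : V → V → ℝ) {S : Finset V} (f : V → ℂ) {v : V}
    (hv : v ∉ S) : lap (induceWeight w S) f v = 0 := by
  simp [lap, induceWeight, hv]

end Induced

section GradientOn

variable {V : Type*} [Fintype V] {w : V → V → ℝ} {S : Finset V}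

theorem gradSqOn_nonneg (hnn : ∀ u v, 0 ≤ w u v) (f : V → ℂ) : 0 ≤ gradSqOn w S f :=
  mul_nonneg (by norm_num) <| sum_nonneg fun u _ => sum_nonneg fun v _ =>
    mul_nonneg (sq_nonneg _) (hnn u v)

theorem gradSqOn_congr_sub_const {f g : V → ℂ} (a : ℂ) (hg : ∀ v ∈ S, g v = f v - a) :
    gradSqOn w S g = gradSqOn w S f := by
  unfold gradSqOn
  congr 1
  refine sum_congr rfl fun u hu => sum_congr rfl fun v hv => ?_
  rw [hg u hu, hg v hv, sub_sub_sub_cancel_right]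

theorem GraphConnectedOn.eq_of_gradSqOn_eq_zero (hconn : GraphConnectedOn w S)
    (hnn : ∀ u v, 0 ≤ w u v) {f : V → ℂ} (hf : gradSqOn w S f = 0) {u v : V} (hu : u ∈ S)
    (hv : v ∈ S) : f u = f v := by
  have hterm_nonneg : ∀ a b, 0 ≤ ‖f a - f b‖ ^ 2 * w a b := fun a b =>
    mul_nonneg (sq_nonneg _) (hnn a b)
  have hsum : ∑ a ∈ S, ∑ b ∈ S, ‖f a - f b‖ ^ 2 * w a b = 0 := by
    simpa [gradSqOn] using hf
  have hstep : ∀ a b, (a ∈ S ∧ b ∈ S ∧ 0 < w a b) → f a = f b := by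
    rintro a b ⟨ha, hb, hw⟩
    have hterm := (sum_eq_zero_iff_of_nonneg fun b _ => hterm_nonneg a b).1
      ((sum_eq_zero_iff_of_nonneg fun a _ => sum_nonneg fun b _ => hterm_nonneg a b).1
        hsum a ha) b hb
    simpa [hw.ne', sub_eq_zero] using hterm
  have := (hconn u hu v hv).lift f hstep
  rwa [Relation.reflTransGen_eq_self] at this

end GradientOn

theorem IsFirstNonzeroEigOn.mul_nsq_le_gradSqOn {V : Type*} [Fintype V] [DecidableEq V]
    {w : V → V → ℝ} {S : Finset V} {lam : ℝ} (hlam : IsFirstNonzeroEigOn w S lam)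
    (hsymm : ∀ u v, w u v = w v u) (hnn : ∀ u v, 0 ≤ w u v) (hconn : GraphConnectedOn w S)
    {h : V → ℂ} (hsupp : ∀ v ∉ S, h v = 0) (hsum : ∑ v ∈ S, h v = 0) :
    lam * nsq h ≤ gradSqOn w S h := by
  have hsymmS := induceWeight_symm hsymm S
  have key := (lapLinearMap_isSymmetric _ hsymmS).mul_norm_sq_le_re_inner_self
    (c := lam) (x := WithLp.toLp 2 h) ?_
  · simpa [inner_lapLinearMap_self _ hsymmS, gradSq_induceWeight, nsq_eq_norm_sq] using key
  intro μ φ hφ hTφ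
  have happly : ∀ v, lap (induceWeight w S) φ v = μ * φ v := fun v => by
    simpa [lapLinearMap_apply] using congrArg (· v) hTφ
  by_cases hμ : μ = 0
  · right
    have hgrad : gradSqOn w S φ = 0 := by
      have := inner_lapLinearMap_self _ hsymmS φ
      simpa [hTφ, hμ, gradSq_induceWeight, eq_comm] using this
    rcases S.eq_empty_or_nonempty with rfl | ⟨u₀, hu₀⟩
    · simp [show h = 0 from funext fun v => hsupp v (notMem_empty v)]
    have hconst : ∀ v ∈ S, φ v = φ u₀ := fun v hv =>
      hconn.eq_of_gradSqOn_eq_zero hnn hgrad hv hu₀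
    rw [PiLp.inner_apply, ← sum_subset (subset_univ S) fun v _ hv => by simp [hsupp v hv]]
    simp only [RCLike.inner_apply']
    rw [sum_congr rfl fun v hv => by rw [hconst v hv], ← mul_sum, hsum, mul_zero]
  · left
    refine (hlam.2.2 μ φ (fun v hv => ?_) ?_ fun v hv => ?_).resolve_left hμ
    · have := happly v
      rw [lap_induceWeight_of_notMem w φ hv] at this
      exact (mul_eq_zero.1 this.symm).resolve_left (by exact_mod_cast hμ)
    · exact fun h0 => hφ (WithLp.ofLp_injective 2 (by simpa using h0))
    · rw [← lap_induceWeight_of_mem w φ hv, happly]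

theorem nsq_mul_norm_ip_sq_le_of_ip_eq_zero {V : Type*} [Fintype V] {ψ e g : V → ℂ}
    (he : nsq e = 1) (hg : ip ψ g = 0) :
    nsq g * ‖ip ψ e‖ ^ 2 ≤ nsq ψ * nsq (fun v => g v - ip e g * e v) := by
  have he' : ‖WithLp.toLp 2 e‖ = 1 := by
    rwa [nsq_eq_norm_sq, pow_eq_one_iff_of_nonneg (norm_nonneg _) two_ne_zero] at he
  have hproj : WithLp.toLp 2 (fun v => g v - ip e g * e v) =
      WithLp.toLp 2 g - ⟪WithLp.toLp 2 e, WithLp.toLp 2 g⟫_ℂ • WithLp.toLp 2 e := by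
    ext v; simp [ip_eq_inner]
  rw [nsq_eq_norm_sq, nsq_eq_norm_sq, nsq_eq_norm_sq, hproj, ip_eq_inner]
  exact norm_sq_mul_norm_inner_sq_le_of_inner_eq_zero he' (by rwa [← ip_eq_inner])

theorem ip_eq_sum_of_support {V : Type*} [Fintype V] {S : Finset V} {ψ : V → ℂ}
    (hsupp : ∀ v ∉ S, ψ v = 0) (f : V → ℂ) :
    ip ψ f = ∑ v ∈ S, (starRingEnd ℂ) (ψ v) * f v :=
  (sum_subset (subset_univ S) fun v _ hv => by simp [hsupp v hv]).symm

section NormalizedIndicator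

variable {V : Type*} [DecidableEq V] (S : Finset V)

noncomputable def normalizedIndicator : V → ℂ :=
  fun v => if v ∈ S then ((1 / Real.sqrt S.card : ℝ) : ℂ) else 0

theorem normalizedIndicator_of_mem {v : V} (hv : v ∈ S) :
    normalizedIndicator S v = ((1 / Real.sqrt S.card : ℝ) : ℂ) :=
  if_pos hv

theorem normalizedIndicator_of_notMem {v : V} (hv : v ∉ S) : normalizedIndicator S v = 0 :=
  if_neg hv

theorem sum_normalizedIndicator : ∑ v ∈ S, normalizedIndicator S v = Real.sqrt S.card := by
  rw [sum_congr rfl fun v => normalizedIndicator_of_mem S, sum_const, nsmul_eq_mul,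
    ← Complex.ofReal_natCast, ← Complex.ofReal_mul, mul_one_div, Real.div_sqrt]

variable [Fintype V]

theorem ip_normalizedIndicator_left (g : V → ℂ) :
    ip (normalizedIndicator S) g = (∑ v ∈ S, g v) / (Real.sqrt S.card : ℂ) := by
  rw [ip_eq_sum_of_support fun v => normalizedIndicator_of_notMem S, sum_div]
  refine sum_congr rfl fun v hv => ?_
  simp [normalizedIndicator_of_mem S hv, div_eq_inv_mul]

theorem ip_normalizedIndicator_right (ψ : V → ℂ) :
    ip ψ (normalizedIndicator S) =
      (∑ v ∈ S, (starRingEnd ℂ) (ψ v)) / (Real.sqrt S.card : ℂ) := by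
  rw [ip_eq_inner, ← inner_conj_symm, ← ip_eq_inner, ip_normalizedIndicator_left, map_div₀,
    map_sum, Complex.conj_ofReal]

variable {S}

theorem nsq_normalizedIndicator (hS : S.Nonempty) : nsq (normalizedIndicator S) = 1 := by
  have hs2 : Real.sqrt S.card ^ 2 = S.card := Real.sq_sqrt (Nat.cast_nonneg _)
  have hn : (S.card : ℝ) ≠ 0 := by exact_mod_cast hS.card_pos.ne'
  rw [nsq, ← sum_subset (subset_univ S) fun v _ hv => by
      simp [normalizedIndicator_of_notMem S hv],
    sum_congr rfl fun v hv => by rw [normalizedIndicator_of_mem S hv]]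
  simp only [sum_const, nsmul_eq_mul, Complex.norm_real, Real.norm_eq_abs, sq_abs, div_pow, hs2]
  field_simp

theorem sum_sub_ip_mul_normalizedIndicator (hS : S.Nonempty) (g : V → ℂ) :
    ∑ v ∈ S, (g v - ip (normalizedIndicator S) g * normalizedIndicator S v) = 0 := by
  have hs : (Real.sqrt S.card : ℂ) ≠ 0 := by
    exact_mod_cast (Real.sqrt_pos.2 (by exact_mod_cast hS.card_pos)).ne'
  rw [sum_sub_distrib, ← mul_sum, sum_normalizedIndicator, ip_normalizedIndicator_left,
    div_mul_cancel₀ _ hs, sub_self]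

end NormalizedIndicator

theorem sum_norm_sub_sq_le_mul_gradSqOn {V : Type*} [Fintype V] [DecidableEq V]
    {w : V → V → ℝ} {S : Finset V} {lam : ℝ} (hlam : IsFirstNonzeroEigOn w S lam)
    (hsymm : ∀ u v, w u v = w v u) (hnn : ∀ u v, 0 ≤ w u v) (hconn : GraphConnectedOn w S)
    {ψ : V → ℂ} (hsupp : ∀ v ∉ S, ψ v = 0) (hnz : ip ψ (normalizedIndicator S) ≠ 0)
    (f : V → ℂ) :
    ∑ v ∈ S, ‖f v - ip ψ f / ((Real.sqrt S.card : ℂ) * ip ψ (normalizedIndicator S))‖ ^ 2 ≤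
      nsq ψ / (lam * ‖ip ψ (normalizedIndicator S)‖ ^ 2) * gradSqOn w S f := by
  set e := normalizedIndicator S
  have hS : S.Nonempty := nonempty_iff_ne_empty.2 fun h0 => hnz (by
    simp [e, ip_normalizedIndicator_right, h0])
  have hs : (Real.sqrt S.card : ℂ) ≠ 0 := by
    exact_mod_cast (Real.sqrt_pos.2 (by exact_mod_cast hS.card_pos)).ne'
  set c := ip ψ f / ((Real.sqrt S.card : ℂ) * ip ψ e)
  set g : V → ℂ := fun v => if v ∈ S then f v - c else 0
  have hψg : ip ψ g = 0 := by
    have hterm : ∀ v ∈ S, (starRingEnd ℂ) (ψ v) * g v =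
        (starRingEnd ℂ) (ψ v) * f v - (starRingEnd ℂ) (ψ v) * c := fun v hv => by
      simp [g, hv, mul_sub]
    have hP : ∑ v ∈ S, (starRingEnd ℂ) (ψ v) = Real.sqrt S.card * ip ψ e := by
      rw [ip_normalizedIndicator_right, mul_div_cancel₀ _ hs]
    rw [ip_eq_sum_of_support hsupp, sum_congr rfl hterm, sum_sub_distrib, ← sum_mul,
      ← ip_eq_sum_of_support hsupp, hP, mul_div_cancel₀ _ (mul_ne_zero hs hnz), sub_self]
  have hg : nsq g = ∑ v ∈ S, ‖f v - c‖ ^ 2 := by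
    simp [nsq, g, apply_ite (fun z : ℂ => ‖z‖ ^ 2), sum_ite_mem]
  set h : V → ℂ := fun v => g v - ip e g * e v
  have hproj := nsq_mul_norm_ip_sq_le_of_ip_eq_zero (nsq_normalizedIndicator hS) hψg
  have hgap : lam * nsq h ≤ gradSqOn w S f := by
    rw [← gradSqOn_congr_sub_const (g := h) (c + ip e g / Real.sqrt S.card) fun v hv => by
      simp [h, g, e, normalizedIndicator, hv, div_eq_mul_inv]; ring]
    exact hlam.mul_nsq_le_gradSqOn hsymm hnn hconn
      (fun v hv => by simp [h, g, e, normalizedIndicator, hv])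
      (sum_sub_ip_mul_normalizedIndicator hS g)
  have hk : 0 < ‖ip ψ e‖ ^ 2 := by positivity
  rw [← hg, div_mul_eq_mul_div, le_div_iff₀ (mul_pos hlam.1 hk)]
  nlinarith [mul_le_mul_of_nonneg_left hgap (nsq_nonneg ψ),
    mul_le_mul_of_nonneg_left hproj hlam.1.le]

open Function in
theorem sum_gradSqOn_le_gradSq {V J : Type*} [Fintype V] [Fintype J] {w : V → V → ℝ}
    (hnn : ∀ u v, 0 ≤ w u v) {S : J → Finset V} (hdisj : Pairwise (Disjoint on S))
    (f : V → ℂ) : ∑ j, gradSqOn w (S j) f ≤ gradSq w f := by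
  have hterm : ∀ u v, 0 ≤ ‖f u - f v‖ ^ 2 * w u v := fun u v =>
    mul_nonneg (sq_nonneg _) (hnn u v)
  unfold gradSqOn gradSq
  rw [← mul_sum]
  gcongr
  calc ∑ j, ∑ u ∈ S j, ∑ v ∈ S j, ‖f u - f v‖ ^ 2 * w u v
      ≤ ∑ j, ∑ u ∈ S j, ∑ v, ‖f u - f v‖ ^ 2 * w u v :=
        sum_le_sum fun j _ => sum_le_sum fun u _ =>
          sum_le_sum_of_subset_of_nonneg (subset_univ _) fun v _ _ => hterm u v
    _ = ∑ u ∈ univ.disjiUnion S (hdisj.set_pairwise _), ∑ v, ‖f u - f v‖ ^ 2 * w u v :=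
        (sum_disjiUnion _ _ _).symm
    _ ≤ ∑ u, ∑ v, ‖f u - f v‖ ^ 2 * w u v :=
        sum_le_sum_of_subset_of_nonneg (subset_univ _) fun u _ _ => sum_nonneg fun v _ => hterm u v

theorem stmt8_general {V J : Type*} [Fintype V] [DecidableEq V] [Fintype J] [Nonempty J]
    (w : V → V → ℝ)
    (hsymm : ∀ u v, w u v = w v u) (hnn : ∀ u v, 0 ≤ w u v)
    (S : J → Finset V)
    (hdisj : ∀ i j, i ≠ j → Disjoint (S i) (S j))
    (hconnS : ∀ j, GraphConnectedOn w (S j))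
    (ψ : J → V → ℂ) (hsupp : ∀ j, ∀ v ∉ S j, ψ j v = 0)
    (φ0 : J → V → ℂ)
    (hφ0 : ∀ j, φ0 j = fun v => if v ∈ S j then ((1 / Real.sqrt ((S j).card) : ℝ) : ℂ) else 0)
    (hnz : ∀ j, ip (ψ j) (φ0 j) ≠ 0)
    (lam1 : J → ℝ) (hlam : ∀ j, IsFirstNonzeroEigOn w (S j) (lam1 j))
    (f : V → ℂ) :
    ∑ j, ∑ v ∈ S j,
        ‖f v - ip (ψ j) f / ((Real.sqrt ((S j).card) : ℂ) * ip (ψ j) (φ0 j))‖ ^ 2 ≤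
      (Finset.univ.sup' Finset.univ_nonempty
          (fun j => nsq (ψ j) / (lam1 j * ‖ip (ψ j) (φ0 j)‖ ^ 2))) * gradSq w f := by
  obtain rfl : φ0 = fun j => normalizedIndicator (S j) := funext hφ0
  beta_reduce
  set Θ := fun j => nsq (ψ j) / (lam1 j * ‖ip (ψ j) (normalizedIndicator (S j))‖ ^ 2)
  have hΘ : ∀ j, Θ j ≤ univ.sup' univ_nonempty Θ := fun j => le_sup' Θ (mem_univ j)
  have hΘ_nonneg : 0 ≤ univ.sup' univ_nonempty Θ := by
    obtain ⟨j⟩ := ‹Nonempty J›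
    exact (div_nonneg (nsq_nonneg _) (mul_nonneg (hlam j).1.le (sq_nonneg _))).trans (hΘ j)
  calc _ ≤ ∑ j, Θ j * gradSqOn w (S j) f := sum_le_sum fun j _ =>
        sum_norm_sub_sq_le_mul_gradSqOn (hlam j) hsymm hnn (hconnS j) (hsupp j) (hnz j) f
    _ ≤ ∑ j, univ.sup' univ_nonempty Θ * gradSqOn w (S j) f := by
        gcongr with j
        exacts [gradSqOn_nonneg hnn f, hΘ j]
    _ ≤ univ.sup' univ_nonempty Θ * gradSq w f := by
        rw [← mul_sum]
        exact mul_le_mul_of_nonneg_left (sum_gradSqOn_le_gradSq hnn hdisj f) hΘ_nonneg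

/-- Theorem 4.1 (generalized Poincaré inequality): with a disjoint cover `{S_j}`, functions
`ψ_j` supported in `S_j` with `⟨ψ_j, φ_{0,j}⟩ ≠ 0`, samples `⟨ζ_j, f⟩ = ⟨ψ_j,f⟩/(√|S_j|⟨ψ_j,φ_{0,j}⟩)`,
and `Θ_Ξ = max_j ‖ψ_j‖²/(λ_{1,j}|⟨ψ_j,φ_{0,j}⟩|²)`, one has
`Σ_j Σ_{v∈S_j} |f(v) − ⟨ζ_j,f⟩|² ≤ Θ_Ξ ‖∇f‖²`. -/
theorem stmt8 {V J : Type*} [Fintype V] [DecidableEq V] [Fintype J] [Nonempty J]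
    (w : V → V → ℝ)
    (hsymm : ∀ u v, w u v = w v u) (hnn : ∀ u v, 0 ≤ w u v) (hdiag : ∀ v, w v v = 0)
    (hconn : GraphConnected w)
    (S : J → Finset V)
    (hdisj : ∀ i j, i ≠ j → Disjoint (S i) (S j))
    (hcover : ∀ v : V, ∃ j, v ∈ S j)
    (hconnS : ∀ j, GraphConnectedOn w (S j)) (hcardS : ∀ j, 1 < (S j).card)
    (ψ : J → V → ℂ) (hsupp : ∀ j, ∀ v ∉ S j, ψ j v = 0)
    (φ0 : J → V → ℂ)
    (hφ0 : ∀ j, φ0 j = fun v => if v ∈ S j then ((1 / Real.sqrt ((S j).card) : ℝ) : ℂ) else 0)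
    (hnz : ∀ j, ip (ψ j) (φ0 j) ≠ 0)
    (lam1 : J → ℝ) (hlam : ∀ j, IsFirstNonzeroEigOn w (S j) (lam1 j))
    (f : V → ℂ) :
    ∑ j, ∑ v ∈ S j,
        ‖f v - ip (ψ j) f / ((Real.sqrt ((S j).card) : ℂ) * ip (ψ j) (φ0 j))‖ ^ 2 ≤
      (Finset.univ.sup' Finset.univ_nonempty
          (fun j => nsq (ψ j) / (lam1 j * ‖ip (ψ j) (φ0 j)‖ ^ 2))) * gradSq w f :=
  stmt8_general w hsymm hnn S hdisj hconnS ψ hsupp φ0 hφ0 hnz lam1 hlam f
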